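/- The function Z satisfies the partial differential equation ∂Z/∂t(t, y) + (σ² − r) y ∂Z/∂y(t, y) + (σ²/2) y² ∂²Z/∂y²(t, y) = 0 for all (t, y) ∈ [0, T) × (1, ∞). -/

import Mathlib

/-- The standard normal cumulative distribution function
`Φ(x) = (1/√(2π)) ∫_{−∞}^x e^(−z²/2) dz`. -/
noncomputable def stdNormalCDF (x : ℝ) : ℝ :=
  (Real.sqrt (2*Real.pi))⁻¹ * ∫ z in Set.Iic x, Real.exp (-z^2/2)

/-- `Z(t, y) = Φ((−log y + (r − σ²/2)(T − t))/(σ√(T − t)))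
             + y^α Φ((−log y − (r − σ²/2)(T − t))/(σ√(T − t)))`. -/
noncomputable def Zfun (r σ T α t y : ℝ) : ℝ :=
  stdNormalCDF ((-Real.log y + (r - σ^2/2)*(T - t)) / (σ * Real.sqrt (T - t)))
    + y^α * stdNormalCDF ((-Real.log y - (r - σ^2/2)*(T - t)) / (σ * Real.sqrt (T - t)))

/-- The standard normal density. -/
noncomputable def phiN (x : ℝ) : ℝ := (Real.sqrt (2*Real.pi))⁻¹ * Real.exp (-x^2/2)

lemma integrable_gauss : MeasureTheory.Integrable (fun z : ℝ => Real.exp (-z^2/2)) := by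
  have h := integrable_exp_neg_mul_sq (show (0:ℝ) < 1/2 by norm_num)
  have e : (fun z : ℝ => Real.exp (-z^2/2)) = fun x : ℝ => Real.exp (-(1/2) * x^2) := by
    funext z; congr 1; ring
  rw [e]; exact h

lemma continuous_gauss : Continuous (fun z : ℝ => Real.exp (-z^2/2)) := by
  fun_prop

lemma hasDerivAt_stdNormalCDF (x : ℝ) : HasDerivAt stdNormalCDF (phiN x) x := by
  have hf := integrable_gauss
  have key : stdNormalCDF = fun u =>
      (Real.sqrt (2*Real.pi))⁻¹ * (∫ z in Set.Iic (0:ℝ), Real.exp (-z^2/2))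
      + (Real.sqrt (2*Real.pi))⁻¹ * ∫ z in (0:ℝ)..u, Real.exp (-z^2/2) := by
    funext u
    rw [← intervalIntegral.integral_Iic_sub_Iic hf.integrableOn hf.integrableOn]
    unfold stdNormalCDF; ring
  rw [key]
  have hmain : HasDerivAt (fun u => ∫ z in (0:ℝ)..u, Real.exp (-z^2/2))
      (Real.exp (-x^2/2)) x :=
    intervalIntegral.integral_hasDerivAt_right hf.intervalIntegrable
      continuous_gauss.aestronglyMeasurable.stronglyMeasurableAtFilter
      continuous_gauss.continuousAt
  exact ((hmain.const_mul _).const_add _)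

lemma hasDerivAt_phiN (x : ℝ) : HasDerivAt phiN (-x * phiN x) x := by
  have hg : HasDerivAt (fun x : ℝ => -x^2/2) (-x) x := by
    have := ((hasDerivAt_pow 2 x).neg).div_const 2
    refine this.congr_deriv ?_; push_cast; ring
  have := (hg.exp).const_mul (Real.sqrt (2*Real.pi))⁻¹
  refine this.congr_deriv ?_
  unfold phiN; ring

lemma hasDerivAt_arg (c s y : ℝ) (hs : s ≠ 0) (hy : 0 < y) :
    HasDerivAt (fun x : ℝ => (-Real.log x + c) / s) (-(1/(y*s))) y := by
  have h := (((Real.hasDerivAt_log (ne_of_gt hy)).neg).add_const c).div_const s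
  refine h.congr_deriv ?_
  field_simp

/-- first y-derivative of `Zfun`. -/
noncomputable def Zy (r σ T α t y : ℝ) : ℝ :=
  -phiN ((-Real.log y + (r - σ^2/2)*(T - t)) / (σ * Real.sqrt (T - t))) / (y * (σ * Real.sqrt (T - t)))
  + α * y^(α-1) * stdNormalCDF ((-Real.log y - (r - σ^2/2)*(T - t)) / (σ * Real.sqrt (T - t)))
  - y^(α-1) * phiN ((-Real.log y - (r - σ^2/2)*(T - t)) / (σ * Real.sqrt (T - t))) / (σ * Real.sqrt (T - t))

/-- second y-derivative of `Zfun`. -/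
noncomputable def Zyy (r σ T α t y : ℝ) : ℝ :=
  -(((-Real.log y + (r - σ^2/2)*(T - t)) / (σ * Real.sqrt (T - t)))
      * phiN ((-Real.log y + (r - σ^2/2)*(T - t)) / (σ * Real.sqrt (T - t))))
      / (y^2 * (σ * Real.sqrt (T - t))^2)
  + phiN ((-Real.log y + (r - σ^2/2)*(T - t)) / (σ * Real.sqrt (T - t))) / (y^2 * (σ * Real.sqrt (T - t)))
  + α*(α-1)*y^(α-2) * stdNormalCDF ((-Real.log y - (r - σ^2/2)*(T - t)) / (σ * Real.sqrt (T - t)))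
  - (2*α-1)*y^(α-2) * phiN ((-Real.log y - (r - σ^2/2)*(T - t)) / (σ * Real.sqrt (T - t))) / (σ * Real.sqrt (T - t))
  - (((-Real.log y - (r - σ^2/2)*(T - t)) / (σ * Real.sqrt (T - t)))
      * phiN ((-Real.log y - (r - σ^2/2)*(T - t)) / (σ * Real.sqrt (T - t)))) * y^(α-2)
      / (σ * Real.sqrt (T - t))^2

/-- t-derivative of `Zfun`. -/
noncomputable def Zt (r σ T α t y : ℝ) : ℝ :=
  phiN ((-Real.log y + (r - σ^2/2)*(T - t)) / (σ * Real.sqrt (T - t)))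
    * ((-Real.log y)/(2*σ*Real.sqrt (T - t)*(T - t)) - (r - σ^2/2)/(2*σ*Real.sqrt (T - t)))
  + y^α * phiN ((-Real.log y - (r - σ^2/2)*(T - t)) / (σ * Real.sqrt (T - t)))
    * ((-Real.log y)/(2*σ*Real.sqrt (T - t)*(T - t)) + (r - σ^2/2)/(2*σ*Real.sqrt (T - t)))

lemma hasDerivAt_Zfun_y (r σ T α t y : ℝ) (hs : σ * Real.sqrt (T - t) ≠ 0) (hy : 0 < y) :
    HasDerivAt (fun x => Zfun r σ T α t x) (Zy r σ T α t y) y := by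
  set s := σ * Real.sqrt (T - t) with hsdef
  set c := (r - σ^2/2)*(T - t) with hcdef
  have h1 : HasDerivAt (fun x : ℝ => (-Real.log x + c) / s) (-(1/(y*s))) y :=
    hasDerivAt_arg c s y hs hy
  have h2 : HasDerivAt (fun x : ℝ => (-Real.log x - c) / s) (-(1/(y*s))) y := by
    have := hasDerivAt_arg (-c) s y hs hy
    simpa [sub_eq_add_neg] using this
  have hΦ1 := (hasDerivAt_stdNormalCDF ((-Real.log y + c)/s)).comp y h1
  have hΦ2 := (hasDerivAt_stdNormalCDF ((-Real.log y - c)/s)).comp y h2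
  have hpow : HasDerivAt (fun x : ℝ => x ^ α) (α * y ^ (α-1)) y :=
    Real.hasDerivAt_rpow_const (Or.inl (ne_of_gt hy))
  have total := hΦ1.add (hpow.mul hΦ2)
  have hZ : (fun x => Zfun r σ T α t x)
      = fun x => stdNormalCDF ((-Real.log x + c)/s) + x ^ α * stdNormalCDF ((-Real.log x - c)/s) := by
    funext x; rfl
  rw [hZ]
  refine total.congr_deriv ?_
  simp only [Function.comp_apply, Pi.div_apply, Pi.neg_apply]
  have hp : y ^ (α-1) = y ^ α / y := by
    rw [Real.rpow_sub hy, Real.rpow_one]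
  unfold Zy
  rw [← hsdef, ← hcdef, hp]
  field_simp
  ring

lemma hasDerivAt_Zy_y (r σ T α t y : ℝ) (hs : σ * Real.sqrt (T - t) ≠ 0) (hy : 0 < y) :
    HasDerivAt (fun x => Zy r σ T α t x) (Zyy r σ T α t y) y := by
  set s := σ * Real.sqrt (T - t) with hsdef
  set c := (r - σ^2/2)*(T - t) with hcdef
  have h1 : HasDerivAt (fun x : ℝ => (-Real.log x + c) / s) (-(1/(y*s))) y :=
    hasDerivAt_arg c s y hs hy
  have h2 : HasDerivAt (fun x : ℝ => (-Real.log x - c) / s) (-(1/(y*s))) y := by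
    have := hasDerivAt_arg (-c) s y hs hy
    simpa [sub_eq_add_neg] using this
  have hphi1 := (hasDerivAt_phiN ((-Real.log y + c)/s)).comp y h1
  have hphi2 := (hasDerivAt_phiN ((-Real.log y - c)/s)).comp y h2
  have hΦ2 := (hasDerivAt_stdNormalCDF ((-Real.log y - c)/s)).comp y h2
  have hpow1 : HasDerivAt (fun x : ℝ => x ^ (α-1)) ((α-1) * y ^ (α-2)) y := by
    have := Real.hasDerivAt_rpow_const (x := y) (p := α-1) (Or.inl (ne_of_gt hy))
    convert this using 2
    ring
  have hd : HasDerivAt (fun x : ℝ => x * s) s y := by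
    simpa using (hasDerivAt_id y).mul_const s
  have t1 := (hphi1.neg).div hd (mul_ne_zero (ne_of_gt hy) hs)
  have t2 := (hpow1.mul hΦ2).const_mul α
  have t3 := (hpow1.mul hphi2).div_const s
  have total := (t1.add t2).sub t3
  have hZ : (fun x => Zy r σ T α t x)
      = fun x => -phiN ((-Real.log x + c)/s) / (x * s)
          + α * (x ^ (α-1) * stdNormalCDF ((-Real.log x - c)/s))
          - x ^ (α-1) * phiN ((-Real.log x - c)/s) / s := by
    funext x; unfold Zy; rw [← hsdef, ← hcdef]; ring
  rw [hZ]
  refine total.congr_deriv ?_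
  simp only [Function.comp_apply, Pi.div_apply, Pi.neg_apply]
  unfold Zyy
  rw [← hsdef, ← hcdef]
  have hp : y ^ (α-1) = y ^ (α-2) * y := by
    rw [show α-1 = α-2+1 by ring, Real.rpow_add_one (ne_of_gt hy)]
  rw [hp]
  field_simp
  ring

lemma hasDerivAt_Zfun_t (r σ T α t y : ℝ) (hσ : σ ≠ 0) (hτ : 0 < T - t) :
    HasDerivAt (fun u => Zfun r σ T α u y) (Zt r σ T α t y) t := by
  have hst : (0:ℝ) < Real.sqrt (T - t) := Real.sqrt_pos.mpr hτ
  have hτd : HasDerivAt (fun u : ℝ => T - u) (-1) t := by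
    simpa using (hasDerivAt_id t).const_sub T
  have hsqrt : HasDerivAt (fun u : ℝ => Real.sqrt (T - u)) (1/(2*Real.sqrt (T - t)) * (-1)) t :=
    (Real.hasDerivAt_sqrt (ne_of_gt hτ)).comp t hτd
  have hden : HasDerivAt (fun u : ℝ => σ * Real.sqrt (T - u)) (σ * (1/(2*Real.sqrt (T - t)) * (-1))) t :=
    hsqrt.const_mul σ
  have hdne : σ * Real.sqrt (T - t) ≠ 0 := mul_ne_zero hσ (ne_of_gt hst)
  have hnum1 : HasDerivAt (fun u : ℝ => -Real.log y + (r - σ^2/2)*(T - u)) ((r - σ^2/2) * (-1)) t :=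
    (hτd.const_mul (r - σ^2/2)).const_add (-Real.log y)
  have hnum2 : HasDerivAt (fun u : ℝ => -Real.log y - (r - σ^2/2)*(T - u)) (-((r - σ^2/2) * (-1))) t :=
    (hτd.const_mul (r - σ^2/2)).const_sub (-Real.log y)
  have harg1 := hnum1.div hden hdne
  have harg2 := hnum2.div hden hdne
  have hΦ1 := (hasDerivAt_stdNormalCDF _).comp t harg1
  have hΦ2 := ((hasDerivAt_stdNormalCDF _).comp t harg2).const_mul (y^α)
  have total := hΦ1.add hΦ2
  have hZ : (fun u => Zfun r σ T α u y)
      = fun u => stdNormalCDF ((-Real.log y + (r - σ^2/2)*(T - u)) / (σ * Real.sqrt (T - u)))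
          + y^α * stdNormalCDF ((-Real.log y - (r - σ^2/2)*(T - u)) / (σ * Real.sqrt (T - u))) := by
    funext u; rfl
  rw [hZ]
  refine total.congr_deriv ?_
  simp only [Function.comp_apply, Pi.div_apply, Pi.neg_apply]
  unfold Zt
  set st := Real.sqrt (T - t) with hstd
  have hT2 : T - t = st^2 := (Real.sq_sqrt hτ.le).symm
  rw [hT2]
  field_simp
  ring

/-- `Z` satisfies
`∂Z/∂t + (σ² − r) y ∂Z/∂y + (σ²/2) y² ∂²Z/∂y² = 0` on `[0, T) × (1, ∞)`. -/
theorem stmt_12 (r σ T α : ℝ) (hr : 0 < r) (hσ : 0 < σ) (hT : 0 < T)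
    (hα : α = 2*r/σ^2 - 1) :
    ∀ t ∈ Set.Ico (0:ℝ) T, ∀ y ∈ Set.Ioi (1:ℝ),
      deriv (fun s => Zfun r σ T α s y) t
        + (σ^2 - r) * y * deriv (fun x => Zfun r σ T α t x) y
        + σ^2/2 * y^2 * deriv (deriv (fun x => Zfun r σ T α t x)) y = 0 := by
  intro t ht y hy
  have hτ : 0 < T - t := sub_pos.mpr ht.2
  have hy0 : (0:ℝ) < y := lt_trans one_pos hy
  have hst : (0:ℝ) < Real.sqrt (T - t) := Real.sqrt_pos.mpr hτ
  have hs : σ * Real.sqrt (T - t) ≠ 0 := mul_ne_zero (ne_of_gt hσ) (ne_of_gt hst)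
  have hdt : deriv (fun s => Zfun r σ T α s y) t = Zt r σ T α t y :=
    (hasDerivAt_Zfun_t r σ T α t y (ne_of_gt hσ) hτ).deriv
  have hdy : deriv (fun x => Zfun r σ T α t x) y = Zy r σ T α t y :=
    (hasDerivAt_Zfun_y r σ T α t y hs hy0).deriv
  have hev : deriv (fun x => Zfun r σ T α t x) =ᶠ[nhds y] (fun x => Zy r σ T α t x) := by
    filter_upwards [Ioi_mem_nhds hy0] with x hx
    exact (hasDerivAt_Zfun_y r σ T α t x hs hx).deriv
  have hdyy : deriv (deriv (fun x => Zfun r σ T α t x)) y = Zyy r σ T α t y := by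
    rw [hev.deriv_eq]
    exact (hasDerivAt_Zy_y r σ T α t y hs hy0).deriv
  rw [hdt, hdy, hdyy]
  unfold Zt Zy Zyy
  have e1 : y ^ (α-1) = y ^ (α-2) * y := by
    rw [show α-1 = α-2+1 by ring, Real.rpow_add_one (ne_of_gt hy0)]
  have e2 : y ^ α = y ^ (α-2) * y * y := by
    rw [← Real.rpow_add_one (ne_of_gt hy0), ← Real.rpow_add_one (ne_of_gt hy0)]
    rw [show α-2+1+1 = α by ring]
  rw [e1, e2]
  set st := Real.sqrt (T - t) with hstd
  have hT2 : T - t = st^2 := (Real.sq_sqrt hτ.le).symm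
  rw [hT2]
  subst hα
  field_simp
  ring
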